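/- arXiv:1808.02690 — 6 statements merged into one kernel-verified Lean document; each statement's English description precedes it below -/
import Mathlib

section
/- Let R be a (not necessarily commutative) ring and let A, D, N̄, π ∈ R satisfy A·N̄ = 1 − π, and suppose that Q := D·N̄ and Q̂ := N̄·D are both nilpotent. Then 1+Q and 1+Q̂ are units and (A + D)·(1+Q̂)⁻¹·(1 − N̄·A) = π·(1+Q)⁻¹·(A + D). -/
/-!
Write `u = 1 + D N̄` and `v = 1 + N̄ D`. From `A N̄ = 1 - π` and the push-through identity
`D v = u D` one checks `(A + D) v⁻¹ = A + π u⁻¹ D` after multiplying by `v`, and `(A + D) N̄ = u - π`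
gives `(A + D) N̄ u⁻¹ = 1 - π u⁻¹`. Since `N̄ u = v N̄`, also `v⁻¹ N̄ = N̄ u⁻¹`, and expanding
`(A + D) v⁻¹ (1 - N̄ A)` with these formulas leaves `π u⁻¹ (A + D)`.
-/

open scoped Ring

theorem SemiconjBy.ringInverse_right {M₀ : Type*} [MonoidWithZero M₀] {a x y : M₀}
    (h : SemiconjBy a x y) (hx : IsUnit x) (hy : IsUnit y) : SemiconjBy a x⁻¹ʳ y⁻¹ʳ := by
  obtain ⟨x, rfl⟩ := hx
  obtain ⟨y, rfl⟩ := hy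
  rw [Ring.inverse_unit, Ring.inverse_unit]
  exact h.units_inv_right

theorem semiconjBy_one_add_mul {R : Type*} [Semiring R] (a b : R) :
    SemiconjBy a (1 + b * a) (1 + a * b) := by
  simp only [SemiconjBy, mul_add, add_mul, mul_one, one_mul, mul_assoc]

theorem add_mul_inverse_one_add_mul_mul_one_sub {R : Type*} [Ring R] {A D N p : R}
    (h : A * N = 1 - p) (hu : IsUnit (1 + D * N)) (hv : IsUnit (1 + N * D)) :
    (A + D) * (1 + N * D)⁻¹ʳ * (1 - N * A) = p * (1 + D * N)⁻¹ʳ * (A + D) := by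
  have hN : N * (1 + D * N)⁻¹ʳ = (1 + N * D)⁻¹ʳ * N :=
    (semiconjBy_one_add_mul N D).ringInverse_right hu hv
  have hleft : (A + D) * (1 + N * D)⁻¹ʳ = A + p * (1 + D * N)⁻¹ʳ * D := by
    rw [eq_comm, Ring.eq_mul_inverse_iff_mul_eq _ _ _ hv]
    calc (A + p * (1 + D * N)⁻¹ʳ * D) * (1 + N * D)
        = A + A * N * D + p * ((1 + D * N)⁻¹ʳ * (D * (1 + N * D))) := by noncomm_ring
      _ = A + (1 - p) * D + p * D := by
        rw [h, (semiconjBy_one_add_mul D N).eq, Ring.inverse_mul_cancel_left _ _ hu]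
      _ = A + D := by noncomm_ring
  have hright : (A + D) * N * (1 + D * N)⁻¹ʳ = 1 - p * (1 + D * N)⁻¹ʳ := by
    calc (A + D) * N * (1 + D * N)⁻¹ʳ = (1 + D * N - p) * (1 + D * N)⁻¹ʳ := by
          rw [add_mul, h, sub_add_eq_add_sub]
      _ = 1 - p * (1 + D * N)⁻¹ʳ := by rw [sub_mul, Ring.mul_inverse_cancel _ hu]
  calc (A + D) * (1 + N * D)⁻¹ʳ * (1 - N * A)
      = (A + D) * (1 + N * D)⁻¹ʳ - (A + D) * ((1 + N * D)⁻¹ʳ * N) * A := by noncomm_ring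
    _ = A + p * (1 + D * N)⁻¹ʳ * D - (A + D) * N * (1 + D * N)⁻¹ʳ * A := by
      rw [hleft, ← hN, ← mul_assoc (A + D)]
    _ = A + p * (1 + D * N)⁻¹ʳ * D - (1 - p * (1 + D * N)⁻¹ʳ) * A := by rw [hright]
    _ = p * (1 + D * N)⁻¹ʳ * (A + D) := by noncomm_ring

/-- In a (not necessarily commutative) ring, if `A·N̄ = 1 − π` and
both `Q := D·N̄` and `Q̂ := N̄·D` are nilpotent, then `1+Q` and `1+Q̂` are units
and `(A + D)·(1+Q̂)⁻¹·(1 − N̄·A) = π·(1+Q)⁻¹·(A + D)`. -/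
theorem nonsemisimple_operator_identity
    {R : Type*} [Ring R] (A D Nb pr : R)
    (h : A * Nb = 1 - pr)
    (hQ : IsNilpotent (D * Nb)) (hQh : IsNilpotent (Nb * D)) :
    IsUnit (1 + D * Nb) ∧ IsUnit (1 + Nb * D) ∧
      (A + D) * Ring.inverse (1 + Nb * D) * (1 - Nb * A)
        = pr * Ring.inverse (1 + D * Nb) * (A + D) :=
  ⟨hQ.isUnit_one_add, hQh.isUnit_one_add,
    add_mul_inverse_one_add_mul_mul_one_sub h hQ.isUnit_one_add hQh.isUnit_one_add⟩
end

section
/- Let m₁₁, m₁₂, m₂₂, ε be real numbers. Define the 2×2 real matrices X = [[ε·m₁₁, ε·m₁₂], [−1, ε·m₂₂]] and X̄ = [[ε_A, ε_B], [−1, ε_A]], where ε_A = (1/2)·ε·(m₁₁ + m₂₂) and ε_B = (ε²·m₁₁·m₂₂ + ε·m₁₂) − (1/4)·ε²·(m₁₁ + m₂₂)². Then the characteristic polynomial of X̄ equals the characteristic polynomial of X, and there exists an invertible 2×2 real matrix T such that X·T = T·X̄. -/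
/-!
A 2 × 2 matrix is determined up to similarity by its trace and determinant once it is
non-scalar, and `[[Δ₁/2, Δ₂ - Δ₁²/4], [-1, Δ₁/2]]` is the representative with equal diagonal
entries. For a matrix with lower-left entry `-1`, conjugating by the upper unitriangular
matrix with corner `(d - a) / 2` balances the diagonal `a, d` and so gives that form.
-/

namespace Matrix

variable {K : Type*} [Field K]

def versalForm (M : Matrix (Fin 2) (Fin 2) K) : Matrix (Fin 2) (Fin 2) K :=
  !![M.trace / 2, M.det - (M.trace / 2) ^ 2; -1, M.trace / 2]

theorem trace_versalForm [NeZero (2 : K)] (M : Matrix (Fin 2) (Fin 2) K) :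
    (versalForm M).trace = M.trace := by
  rw [versalForm, trace_fin_two_of, add_halves]

theorem det_versalForm (M : Matrix (Fin 2) (Fin 2) K) : (versalForm M).det = M.det := by
  rw [versalForm, det_fin_two_of]
  ring

theorem charpoly_versalForm [NeZero (2 : K)] (M : Matrix (Fin 2) (Fin 2) K) :
    (versalForm M).charpoly = M.charpoly := by
  rw [charpoly_fin_two, charpoly_fin_two, trace_versalForm, det_versalForm]

theorem isUnit_unitriangular_fin_two (t : K) : IsUnit !![(1 : K), t; 0, 1] := by
  rw [isUnit_iff_isUnit_det, det_fin_two_of]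
  simp

theorem mul_unitriangular_eq_unitriangular_mul_versalForm [NeZero (2 : K)] (a b d : K) :
    !![a, b; -1, d] * !![1, (d - a) / 2; 0, 1] =
      !![1, (d - a) / 2; 0, 1] * versalForm !![a, b; -1, d] := by
  rw [versalForm, trace_fin_two_of, det_fin_two_of]
  ext i j
  fin_cases i <;> fin_cases j <;> simp <;> field_simp <;> ring

end Matrix

open Matrix in
/-- The planar perturbed nilpotent matrix
`X = [[ε·m₁₁, ε·m₁₂], [−1, ε·m₂₂]]` has the same characteristic polynomial as its
versal normal form `X̄ = [[ε_A, ε_B], [−1, ε_A]]` with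
`ε_A = (1/2)·ε·(m₁₁+m₂₂)` and `ε_B = (ε²·m₁₁·m₂₂ + ε·m₁₂) − (1/4)·ε²·(m₁₁+m₂₂)²`,
and there is an invertible `T` with `X·T = T·X̄`. -/
theorem versal_normal_form_2d (m11 m12 m22 ε : ℝ) :
    let εA : ℝ := (1/2) * ε * (m11 + m22)
    let εB : ℝ := (ε^2 * m11 * m22 + ε * m12) - (1/4) * ε^2 * (m11 + m22)^2
    let X : Matrix (Fin 2) (Fin 2) ℝ := !![ε * m11, ε * m12; -1, ε * m22]
    let Xbar : Matrix (Fin 2) (Fin 2) ℝ := !![εA, εB; -1, εA]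
    Xbar.charpoly = X.charpoly ∧
      ∃ T : Matrix (Fin 2) (Fin 2) ℝ, IsUnit T ∧ X * T = T * Xbar := by
  intro εA εB X Xbar
  have hεA : εA = X.trace / 2 := by
    simp only [εA, X, trace_fin_two_of]
    ring
  have hεB : εB = X.det - εA ^ 2 := by
    simp only [εB, εA, X, det_fin_two_of]
    ring
  have hXbar : Xbar = versalForm X := by
    rw [versalForm, ← hεA, ← hεB]
  rw [hXbar]
  exact ⟨charpoly_versalForm X, _, isUnit_unitriangular_fin_two _,
    mul_unitriangular_eq_unitriangular_mul_versalForm _ _ _⟩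
end

section
/- Let ε_A, ε_B be real numbers and let X̄₀ : ℝ² → ℝ² be the linear vector field X̄₀(x, y) = (ε_A·x + ε_B·y, −x + ε_A·y). Then for every vector field X₁ : ℝ² → ℝ² whose two components are homogeneous polynomials of degree 2, there exist a vector field t₁ : ℝ² → ℝ² whose components are homogeneous polynomials of degree 2 and real numbers c_A, c_B such that for all (x, y) ∈ ℝ², [X̄₀, t₁](x, y) = X₁(x, y) − c_A·(x·y, y²) − c_B·(y², 0). -/
/-!
On homogeneous quadratic fields, `t ↦ [X̄₀, t]` acts linearly on the six coefficients. Its image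
together with `(xy, y²)` and `(y², 0)` spans all quadratic fields, as one sees by solving the
resulting linear system, which is triangular once the `x²` coefficients of `t` are set to zero.
-/

/-- A planar vector field whose two components are homogeneous polynomials of
degree 2. -/
def IsHomQuadVF2 (f : ℝ × ℝ → ℝ × ℝ) : Prop :=
  ∃ a1 a2 a3 b1 b2 b3 : ℝ, ∀ p : ℝ × ℝ,
    f p = (a1 * p.1 ^ 2 + a2 * p.1 * p.2 + a3 * p.2 ^ 2,
           b1 * p.1 ^ 2 + b2 * p.1 * p.2 + b3 * p.2 ^ 2)

def quadForm (a₁ a₂ a₃ : ℝ) (q : ℝ × ℝ) : ℝ :=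
  a₁ * q.1 ^ 2 + a₂ * q.1 * q.2 + a₃ * q.2 ^ 2

def quadVF (a₁ a₂ a₃ b₁ b₂ b₃ : ℝ) (q : ℝ × ℝ) : ℝ × ℝ :=
  (quadForm a₁ a₂ a₃ q, quadForm b₁ b₂ b₃ q)

lemma isHomQuadVF2_quadVF (a₁ a₂ a₃ b₁ b₂ b₃ : ℝ) :
    IsHomQuadVF2 (quadVF a₁ a₂ a₃ b₁ b₂ b₃) :=
  ⟨a₁, a₂, a₃, b₁, b₂, b₃, fun _ => rfl⟩

lemma hasFDerivAt_quadForm (a₁ a₂ a₃ : ℝ) (p : ℝ × ℝ) :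
    HasFDerivAt (quadForm a₁ a₂ a₃)
      ((2 * a₁ * p.1 + a₂ * p.2) • ContinuousLinearMap.fst ℝ ℝ ℝ
        + (a₂ * p.1 + 2 * a₃ * p.2) • ContinuousLinearMap.snd ℝ ℝ ℝ) p := by
  have hx : HasFDerivAt Prod.fst (ContinuousLinearMap.fst ℝ ℝ ℝ) p := hasFDerivAt_fst
  have hy : HasFDerivAt Prod.snd (ContinuousLinearMap.snd ℝ ℝ ℝ) p := hasFDerivAt_snd
  refine ((((hx.pow 2).const_mul a₁).add ((hx.const_mul a₂).mul hy)).add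
    ((hy.pow 2).const_mul a₃)).congr_fderiv ?_
  refine ContinuousLinearMap.ext fun v => ?_
  simp only [nsmul_eq_mul, Nat.cast_ofNat, add_apply, smul_apply, smul_eq_mul,
    ContinuousLinearMap.coe_fst', ContinuousLinearMap.coe_snd']
  ring

lemma fderiv_quadVF_apply (a₁ a₂ a₃ b₁ b₂ b₃ : ℝ) (p v : ℝ × ℝ) :
    fderiv ℝ (quadVF a₁ a₂ a₃ b₁ b₂ b₃) p v =
      ((2 * a₁ * p.1 + a₂ * p.2) * v.1 + (a₂ * p.1 + 2 * a₃ * p.2) * v.2,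
       (2 * b₁ * p.1 + b₂ * p.2) * v.1 + (b₂ * p.1 + 2 * b₃ * p.2) * v.2) := by
  rw [HasFDerivAt.fderiv (f := quadVF a₁ a₂ a₃ b₁ b₂ b₃)
    ((hasFDerivAt_quadForm a₁ a₂ a₃ p).prodMk (hasFDerivAt_quadForm b₁ b₂ b₃ p))]
  simp

lemma fderiv_linearVF_apply (a b c d : ℝ) (p v : ℝ × ℝ) :
    fderiv ℝ (fun q : ℝ × ℝ => (a * q.1 + b * q.2, c * q.1 + d * q.2)) p v =
      (a * v.1 + b * v.2, c * v.1 + d * v.2) := by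
  let L : ℝ × ℝ →L[ℝ] ℝ × ℝ :=
    (a • ContinuousLinearMap.fst ℝ ℝ ℝ + b • ContinuousLinearMap.snd ℝ ℝ ℝ).prod
      (c • ContinuousLinearMap.fst ℝ ℝ ℝ + d • ContinuousLinearMap.snd ℝ ℝ ℝ)
  have hL : (fun q : ℝ × ℝ => (a * q.1 + b * q.2, c * q.1 + d * q.2)) = L := by
    funext q; simp [L]
  rw [hL, L.fderiv]
  simp [L]

lemma lieBracket_linearVF_quadVF (εA εB α₁ α₂ α₃ β₁ β₂ β₃ : ℝ) (p : ℝ × ℝ) :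
    fderiv ℝ (quadVF α₁ α₂ α₃ β₁ β₂ β₃) p (εA * p.1 + εB * p.2, -p.1 + εA * p.2)
      - fderiv ℝ (fun q : ℝ × ℝ => (εA * q.1 + εB * q.2, -q.1 + εA * q.2)) p
          (quadVF α₁ α₂ α₃ β₁ β₂ β₃ p)
      = quadVF (εA * α₁ - α₂ - εB * β₁) (2 * εB * α₁ + εA * α₂ - 2 * α₃ - εB * β₂)
          (εB * α₂ + εA * α₃ - εB * β₃) (α₁ + εA * β₁ - β₂)
          (α₂ + 2 * εB * β₁ + εA * β₂ - 2 * β₃) (α₃ + εB * β₂ + εA * β₃) p := by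
  have hX₀ : (fun q : ℝ × ℝ => (εA * q.1 + εB * q.2, -q.1 + εA * q.2))
      = fun q : ℝ × ℝ => (εA * q.1 + εB * q.2, -1 * q.1 + εA * q.2) := by
    simp only [neg_one_mul]
  rw [hX₀, fderiv_linearVF_apply, fderiv_quadVF_apply]
  simp only [quadVF, quadForm, Prod.mk_sub_mk, Prod.mk.injEq]
  constructor <;> ring

/-- For the linear vector field
`X̄₀(x,y) = (ε_A·x + ε_B·y, −x + ε_A·y)`, every homogeneous quadratic vector
field `X₁` can be brought into normal form: there are a homogeneous quadratic
vector field `t₁` and reals `c_A, c_B` with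
`[X̄₀, t₁] = X₁ − c_A·(xy, y²) − c_B·(y², 0)`, where
`[f, g](p) = Dg(p)(f(p)) − Df(p)(g(p))`. -/
theorem quadratic_normal_form_2d (εA εB : ℝ)
    (X1 : ℝ × ℝ → ℝ × ℝ) (hX1 : IsHomQuadVF2 X1) :
    ∃ t1 : ℝ × ℝ → ℝ × ℝ, IsHomQuadVF2 t1 ∧
      ∃ cA cB : ℝ, ∀ p : ℝ × ℝ,
        fderiv ℝ t1 p ((fun q : ℝ × ℝ => (εA * q.1 + εB * q.2, -q.1 + εA * q.2)) p)
          - fderiv ℝ (fun q : ℝ × ℝ => (εA * q.1 + εB * q.2, -q.1 + εA * q.2)) p (t1 p)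
        = X1 p - cA • (p.1 * p.2, p.2 ^ 2) - cB • (p.2 ^ 2, (0 : ℝ)) := by
  obtain ⟨a₁, a₂, a₃, b₁, b₂, b₃, hX1⟩ := hX1
  -- With `α₁ = β₁ = 0` the coefficient equations are triangular: the `x²` terms fix `α₂, β₂`,
  -- the `xy` term of the second component fixes `β₃`, and eliminating `cA` between the
  -- remaining `xy` and `y²` equations fixes `α₃`; `cA, cB` absorb what is left.
  let α₂ := -a₁
  let β₂ := -b₁
  let β₃ := (α₂ + εA * β₂ - b₂) / 2
  let α₃ := (b₃ - a₂ + εA * α₂ - 2 * εB * β₂ - εA * β₃) / 3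
  refine ⟨quadVF 0 α₂ α₃ 0 β₂ β₃, isHomQuadVF2_quadVF .., b₃ - α₃ - εB * β₂ - εA * β₃,
    a₃ - εB * α₂ - εA * α₃ + εB * β₃, fun p => ?_⟩
  rw [lieBracket_linearVF_quadVF, hX1]
  simp only [quadVF, quadForm, Prod.mk_sub_mk, Prod.smul_mk, smul_eq_mul, Prod.mk.injEq]
  constructor <;> · simp only [α₃, β₃]; ring
end

section
/- Let m₁₁, m₁₂, m₁₃, m₂₂, m₂₃, m₃₃, ε be real numbers. Define the 3×3 real matrices X = [[ε·m₁₁, ε·m₁₂, ε·m₁₃], [−1, ε·m₂₂, ε·m₂₃], [0, −2, ε·m₃₃]] and X̄ = [[ε_A, 2·ε_B, ε_C], [−1, ε_A, ε_B], [0, −2, ε_A]], where, writing Δ₁, Δ₂, Δ₃ for the coefficients of the characteristic polynomial of X via charpoly(X) = λ³ − Δ₁·λ² + Δ₂·λ − Δ₃, one sets ε_A = Δ₁/3, ε_B = Δ₂/4 − Δ₁²/12, ε_C = Δ₃/2 − Δ₁·Δ₂/6 + Δ₁³/27. Define T = [[1, ε·t₁, ε·t₂], [0, 1, ε·t₃],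 [0, 0, 1]] with t₁ = (1/3)·(m₃₃ + m₂₂ − 2·m₁₁), t₂ = (5/36)·ε·m₁₁·(m₁₁ − m₂₂ − m₃₃) − (1/36)·ε·m₂₂·(m₂₂ − 7·m₃₃) − (1/36)·ε·m₃₃² + (1/2)·m₂₃ − (1/4)·m₁₂, and t₃ = (1/3)·(m₃₃ − (1/2)·m₂₂ − (1/2)·m₁₁). Then T is invertible and X·T = T·X̄. -/
/-!
Comparing coefficients of the characteristic polynomial identifies `Δ₁`, `Δ₂`, `Δ₃` with the
trace, the sum of principal `2 × 2` minors and the determinant of `X`, explicit polynomials in `ε`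
and the `mᵢⱼ`. After this substitution `X * T = T * X̄` is a polynomial identity, and `T` is
unitriangular, so has determinant `1`.
-/

open Polynomial

namespace Matrix

variable {R : Type*} [CommRing R]

theorem charpoly_fin_three (M : Matrix (Fin 3) (Fin 3) R) :
    M.charpoly = X ^ 3 - C M.trace * X ^ 2
      + C (M 0 0 * M 1 1 - M 0 1 * M 1 0 + M 0 0 * M 2 2 - M 0 2 * M 2 0
          + M 1 1 * M 2 2 - M 1 2 * M 2 1) * X
      - C M.det := by
  rw [charpoly, det_fin_three, trace_fin_three, det_fin_three]
  simp only [charmatrix_apply, diagonal_apply, Fin.reduceEq, if_true, if_false, map_sub,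
    map_add, map_mul, zero_sub]
  ring

theorem isUnit_unitriangular_fin_three (a b c : R) : IsUnit !![1, a, b; 0, 1, c; 0, 0, 1] := by
  rw [isUnit_iff_isUnit_det, det_fin_three]
  simp

end Matrix

namespace Polynomial

variable {R : Type*} [CommRing R]

theorem coeffs_eq_of_cubic_eq {a b c a' b' c' : R}
    (h : X ^ 3 - C a * X ^ 2 + C b * X - C c = X ^ 3 - C a' * X ^ 2 + C b' * X - C c') :
    a = a' ∧ b = b' ∧ c = c' := by
  have coeff_cubic (a b c : R) :
      (X ^ 3 - C a * X ^ 2 + C b * X - C c).coeff 2 = -a ∧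
        (X ^ 3 - C a * X ^ 2 + C b * X - C c).coeff 1 = b ∧
        (X ^ 3 - C a * X ^ 2 + C b * X - C c).coeff 0 = -c := by
    simp [coeff_X, coeff_C, coeff_X_pow]
  obtain ⟨h2, h1, h0⟩ := coeff_cubic a b c
  obtain ⟨h2', h1', h0'⟩ := coeff_cubic a' b' c'
  rw [h] at h2 h1 h0
  exact ⟨neg_injective (h2.symm.trans h2'), h1.symm.trans h1', neg_injective (h0.symm.trans h0')⟩

end Polynomial

/-- For the perturbed 3-dimensional irreducible nilpotent matrix
`X = [[ε·m₁₁, ε·m₁₂, ε·m₁₃], [−1, ε·m₂₂, ε·m₂₃], [0, −2, ε·m₃₃]]` with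
characteristic polynomial `λ³ − Δ₁·λ² + Δ₂·λ − Δ₃`, setting
`ε_A = Δ₁/3`, `ε_B = Δ₂/4 − Δ₁²/12`, `ε_C = Δ₃/2 − Δ₁·Δ₂/6 + Δ₁³/27`, the
explicit upper-triangular matrix `T` is invertible and conjugates `X` to its
versal normal form `X̄ = [[ε_A, 2ε_B, ε_C], [−1, ε_A, ε_B], [0, −2, ε_A]]`. -/
theorem versal_normal_form_3d (m11 m12 m13 m22 m23 m33 ε Δ1 Δ2 Δ3 : ℝ)
    (X : Matrix (Fin 3) (Fin 3) ℝ)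
    (hX : X = !![ε*m11, ε*m12, ε*m13; -1, ε*m22, ε*m23; 0, -2, ε*m33])
    (hchar : X.charpoly =
      Polynomial.X ^ 3 - Polynomial.C Δ1 * Polynomial.X ^ 2
        + Polynomial.C Δ2 * Polynomial.X - Polynomial.C Δ3) :
    let εA : ℝ := Δ1 / 3
    let εB : ℝ := Δ2 / 4 - Δ1 ^ 2 / 12
    let εC : ℝ := Δ3 / 2 - Δ1 * Δ2 / 6 + Δ1 ^ 3 / 27
    let Xbar : Matrix (Fin 3) (Fin 3) ℝ := !![εA, 2*εB, εC; -1, εA, εB; 0, -2, εA]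
    let t1 : ℝ := (1/3) * (m33 + m22 - 2*m11)
    let t2 : ℝ := (5/36)*ε*m11*(m11 - m22 - m33) - (1/36)*ε*m22*(m22 - 7*m33)
        - (1/36)*ε*m33^2 + (1/2)*m23 - (1/4)*m12
    let t3 : ℝ := (1/3) * (m33 - (1/2)*m22 - (1/2)*m11)
    let T : Matrix (Fin 3) (Fin 3) ℝ := !![1, ε*t1, ε*t2; 0, 1, ε*t3; 0, 0, 1]
    IsUnit T ∧ X * T = T * Xbar := by
  intro εA εB εC Xbar t1 t2 t3 T
  rw [Matrix.charpoly_fin_three] at hchar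
  obtain ⟨htr, hminors, hdet⟩ := Polynomial.coeffs_eq_of_cubic_eq hchar.symm
  subst hX
  have hΔ1 : Δ1 = ε * (m11 + m22 + m33) := by
    simp [htr, Matrix.trace_fin_three]
    ring
  have hΔ2 : Δ2 = ε ^ 2 * (m11 * m22 + m11 * m33 + m22 * m33) + ε * m12 + 2 * ε * m23 := by
    simp [hminors]
    ring
  have hΔ3 : Δ3 = ε ^ 3 * m11 * m22 * m33 + 2 * ε ^ 2 * m11 * m23 + ε ^ 2 * m12 * m33
      + 2 * ε * m13 := by
    simp [hdet, Matrix.det_fin_three]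
    ring
  refine ⟨Matrix.isUnit_unitriangular_fin_three _ _ _, ?_⟩
  simp only [T, Xbar, εA, εB, εC, t1, t2, t3, hΔ1, hΔ2, hΔ3, Matrix.mul_fin_three]
  ring_nf
end

section
/- Let m₁₁, m₁₂, m₁₃, m₂₂, m₂₃, m₃₃, ε be real numbers, let X = [[ε·m₁₁, ε·m₁₂, ε·m₁₃], [−1, ε·m₂₂, ε·m₂₃], [0, −2, ε·m₃₃]], and write its characteristic polynomial as charpoly(X) = λ³ − Δ₁·λ² + Δ₂·λ − Δ₃. Set ε_A = Δ₁/3, ε_B = Δ₂/4 − Δ₁²/12, ε_C = Δ₃/2 − Δ₁·Δ₂/6 + Δ₁³/27, and X̄ = [[ε_A, 2·ε_B, ε_C], [−1, ε_A, ε_B], [0, −2, ε_A]]. Then charpoly(X̄) = λ³ − 3·ε_A·λ² + (3·ε_A² + 4·ε_B)·λ − (ε_A³ + 4·ε_A·ε_B + 2·ε_C), and this polynomial equals charpoly(X). -/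
open Polynomial

theorem Matrix.charpoly_of_fin_three {R : Type*} [CommRing R] (a b c d e f g h i : R) :
    (!![a, b, c; d, e, f; g, h, i] : Matrix (Fin 3) (Fin 3) R).charpoly =
      X ^ 3 - C (a + e + i) * X ^ 2 + C (a * e + a * i + e * i - b * d - c * g - f * h) * X
        - C (a * e * i + b * f * g + c * d * h - c * e * g - b * d * i - a * f * h) := by
  rw [Matrix.charpoly, Matrix.det_fin_three]
  simp only [Fin.isValue, Matrix.charmatrix_apply_eq, Matrix.of_apply, Matrix.cons_val',
    Matrix.cons_val_zero, Matrix.cons_val_fin_one, Matrix.cons_val_one, Matrix.cons_val, ne_eq,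
    Fin.reduceEq, not_false_eq_true, Matrix.charmatrix_apply_ne, mul_neg, neg_mul, neg_neg,
    map_add, map_sub, map_mul]
  ring

def versalNormalForm {R : Type*} [Ring R] (a b c : R) : Matrix (Fin 3) (Fin 3) R :=
  !![a, 2 * b, c; -1, a, b; 0, -2, a]

theorem charpoly_versalNormalForm {R : Type*} [CommRing R] (a b c : R) :
    (versalNormalForm a b c).charpoly =
      X ^ 3 - C (3 * a) * X ^ 2 + C (3 * a ^ 2 + 4 * b) * X - C (a ^ 3 + 4 * a * b + 2 * c) := by
  rw [versalNormalForm, Matrix.charpoly_of_fin_three]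
  simp only [map_add, map_sub, map_mul, map_pow, map_neg, map_ofNat, map_zero, map_one]
  ring

/-- The parameters solve the triangular system `Δ₁ = 3a`, `Δ₂ = 3a² + 4b`, `Δ₃ = a³ + 4ab + 2c`
read off from `charpoly_versalNormalForm`. -/
theorem charpoly_versalNormalForm_of_coeffs {K : Type*} [Field K] [CharZero K] (Δ1 Δ2 Δ3 : K) :
    (versalNormalForm (Δ1 / 3) (Δ2 / 4 - Δ1 ^ 2 / 12)
        (Δ3 / 2 - Δ1 * Δ2 / 6 + Δ1 ^ 3 / 27)).charpoly =
      X ^ 3 - C Δ1 * X ^ 2 + C Δ2 * X - C Δ3 := by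
  have hΔ1 : 3 * (Δ1 / 3) = Δ1 := by ring
  have hΔ2 : 3 * (Δ1 / 3) ^ 2 + 4 * (Δ2 / 4 - Δ1 ^ 2 / 12) = Δ2 := by ring
  have hΔ3 : (Δ1 / 3) ^ 3 + 4 * (Δ1 / 3) * (Δ2 / 4 - Δ1 ^ 2 / 12)
      + 2 * (Δ3 / 2 - Δ1 * Δ2 / 6 + Δ1 ^ 3 / 27) = Δ3 := by ring
  rw [charpoly_versalNormalForm, hΔ1, hΔ2, hΔ3]

theorem charpoly_versal_normal_form_3d_general (Δ1 Δ2 Δ3 : ℝ)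
    (X : Matrix (Fin 3) (Fin 3) ℝ)
    (hchar : X.charpoly =
      Polynomial.X ^ 3 - Polynomial.C Δ1 * Polynomial.X ^ 2
        + Polynomial.C Δ2 * Polynomial.X - Polynomial.C Δ3) :
    let εA : ℝ := Δ1 / 3
    let εB : ℝ := Δ2 / 4 - Δ1 ^ 2 / 12
    let εC : ℝ := Δ3 / 2 - Δ1 * Δ2 / 6 + Δ1 ^ 3 / 27
    let Xbar : Matrix (Fin 3) (Fin 3) ℝ := !![εA, 2*εB, εC; -1, εA, εB; 0, -2, εA]
    Xbar.charpoly =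
        Polynomial.X ^ 3 - Polynomial.C (3 * εA) * Polynomial.X ^ 2
          + Polynomial.C (3 * εA ^ 2 + 4 * εB) * Polynomial.X
          - Polynomial.C (εA ^ 3 + 4 * εA * εB + 2 * εC) ∧
      Xbar.charpoly = X.charpoly :=
  ⟨charpoly_versalNormalForm _ _ _, (charpoly_versalNormalForm_of_coeffs Δ1 Δ2 Δ3).trans hchar.symm⟩

/-- For the perturbed 3-dimensional irreducible nilpotent matrix
`X = [[ε·m₁₁, ε·m₁₂, ε·m₁₃], [−1, ε·m₂₂, ε·m₂₃], [0, −2, ε·m₃₃]]` with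
characteristic polynomial `λ³ − Δ₁·λ² + Δ₂·λ − Δ₃`, setting
`ε_A = Δ₁/3`, `ε_B = Δ₂/4 − Δ₁²/12`, `ε_C = Δ₃/2 − Δ₁·Δ₂/6 + Δ₁³/27`, the
versal normal form `X̄ = [[ε_A, 2ε_B, ε_C], [−1, ε_A, ε_B], [0, −2, ε_A]]` has
characteristic polynomial
`λ³ − 3ε_A·λ² + (3ε_A² + 4ε_B)·λ − (ε_A³ + 4ε_A·ε_B + 2ε_C)`, which equals the
characteristic polynomial of `X`. -/
theorem charpoly_versal_normal_form_3d (m11 m12 m13 m22 m23 m33 ε Δ1 Δ2 Δ3 : ℝ)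
    (X : Matrix (Fin 3) (Fin 3) ℝ)
    (hX : X = !![ε*m11, ε*m12, ε*m13; -1, ε*m22, ε*m23; 0, -2, ε*m33])
    (hchar : X.charpoly =
      Polynomial.X ^ 3 - Polynomial.C Δ1 * Polynomial.X ^ 2
        + Polynomial.C Δ2 * Polynomial.X - Polynomial.C Δ3) :
    let εA : ℝ := Δ1 / 3
    let εB : ℝ := Δ2 / 4 - Δ1 ^ 2 / 12
    let εC : ℝ := Δ3 / 2 - Δ1 * Δ2 / 6 + Δ1 ^ 3 / 27
    let Xbar : Matrix (Fin 3) (Fin 3) ℝ := !![εA, 2*εB, εC; -1, εA, εB; 0, -2, εA]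
    Xbar.charpoly =
        Polynomial.X ^ 3 - Polynomial.C (3 * εA) * Polynomial.X ^ 2
          + Polynomial.C (3 * εA ^ 2 + 4 * εB) * Polynomial.X
          - Polynomial.C (εA ^ 3 + 4 * εA * εB + 2 * εC) ∧
      Xbar.charpoly = X.charpoly :=
  charpoly_versal_normal_form_3d_general Δ1 Δ2 Δ3 X hchar
end

section
/- Let ε be a real number with −(6 + 4·√2)/3 < ε < (6 − 4·√2)/3, so that D := −(3·ε − 6 + 4·√2)·(3·ε + 6 + 4·√2) > 0. Set α₁ = √D, ε_N = 1/4 − α₁/8, and ε_S = (1/2)·(√2 − (1/2)·√(4 + 2·α₁)). Then 2·ε_S·(√2 − ε_S) = 2·ε_N and (4·ε_N − 1)² = −(1/4)·(3·ε − 6 + 4·√2)·(3·ε + 6 + 4·√2). -/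
/-! Writing `s = √(4 + 2α)`, the product `2 ε_S (√2 - ε_S)` is the difference of squares
`(2 - s²/4)/2 = 1/2 - α/4 = 2 ε_N`, and `(4 ε_N - 1)² = α²/4`, which is `D/4` for `α = √D`. -/

open Real

noncomputable section

def versalN (α : ℝ) : ℝ := 1/4 - α / 8

def versalS (α : ℝ) : ℝ := (1/2) * (√2 - (1/2) * √(4 + 2 * α))

theorem two_mul_versalS_mul_sqrt_two_sub {α : ℝ} (hα : -2 ≤ α) :
    2 * versalS α * (√2 - versalS α) = 2 * versalN α := by
  have hs : √(4 + 2 * α) ^ 2 = 4 + 2 * α := sq_sqrt (by linarith)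
  have h2 : √2 ^ 2 = 2 := sq_sqrt zero_le_two
  unfold versalS versalN
  linear_combination (1/2) * h2 - (1/8) * hs

theorem sq_four_mul_versalN_sub_one (α : ℝ) : (4 * versalN α - 1) ^ 2 = α ^ 2 / 4 := by
  unfold versalN
  ring

end

theorem versal_parameters_L4_general (ε : ℝ)
    (hD : -((3 * ε - 6 + 4 * Real.sqrt 2) * (3 * ε + 6 + 4 * Real.sqrt 2)) > 0) :
    let α1 : ℝ := Real.sqrt (-((3 * ε - 6 + 4 * Real.sqrt 2)
        * (3 * ε + 6 + 4 * Real.sqrt 2)))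
    let εN : ℝ := 1/4 - α1 / 8
    let εS : ℝ := (1/2) * (Real.sqrt 2 - (1/2) * Real.sqrt (4 + 2 * α1))
    2 * εS * (Real.sqrt 2 - εS) = 2 * εN ∧
      (4 * εN - 1) ^ 2 = -(1/4) * (3 * ε - 6 + 4 * Real.sqrt 2)
          * (3 * ε + 6 + 4 * Real.sqrt 2) := by
  intro α1 εN εS
  have hα1 : 0 ≤ α1 := sqrt_nonneg _
  refine ⟨two_mul_versalS_mul_sqrt_two_sub (by linarith), ?_⟩
  calc (4 * versalN α1 - 1) ^ 2 = α1 ^ 2 / 4 := sq_four_mul_versalN_sub_one α1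
    _ = _ := by rw [sq_sqrt hD.le]; ring

/-- For `ε` in the interval `(−(6+4√2)/3, (6−4√2)/3)`, so that
`D := −(3ε−6+4√2)(3ε+6+4√2) > 0`, the versal parameters
`ε_N = 1/4 − √D/8` and `ε_S = (1/2)(√2 − (1/2)√(4+2√D))` satisfy
`2ε_S(√2 − ε_S) = 2ε_N` and `(4ε_N − 1)² = −(1/4)(3ε−6+4√2)(3ε+6+4√2)`. -/
theorem versal_parameters_L4 (ε : ℝ)
    (hlo : -(6 + 4 * Real.sqrt 2) / 3 < ε)
    (hhi : ε < (6 - 4 * Real.sqrt 2) / 3)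
    (hD : -((3 * ε - 6 + 4 * Real.sqrt 2) * (3 * ε + 6 + 4 * Real.sqrt 2)) > 0) :
    let α1 : ℝ := Real.sqrt (-((3 * ε - 6 + 4 * Real.sqrt 2)
        * (3 * ε + 6 + 4 * Real.sqrt 2)))
    let εN : ℝ := 1/4 - α1 / 8
    let εS : ℝ := (1/2) * (Real.sqrt 2 - (1/2) * Real.sqrt (4 + 2 * α1))
    2 * εS * (Real.sqrt 2 - εS) = 2 * εN ∧
      (4 * εN - 1) ^ 2 = -(1/4) * (3 * ε - 6 + 4 * Real.sqrt 2)
          * (3 * ε + 6 + 4 * Real.sqrt 2) :=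
  versal_parameters_L4_general ε hD
end
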